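/- g* = lcm(δ_1,...,δ_n) + 1 is minimal among granularities containing all former modal points: if a granularity h ≥ 2 is such that for every i and every j ∈ {0,...,2δ_i}, j/(2δ_i) = j'/(2(h-1)) for some integer j', then h - 1 is a common multiple of δ_1,...,δ_n, hence h ≥ g*. -/

import Mathlib

open Finset

theorem Nat.dvd_of_one_div_two_mul_eq_div {d m k : ℕ} (hd : d ≠ 0)
    (h : (1 : ℝ) / (2 * d) = k / (2 * m)) : d ∣ m := by
  have hm : (m : ℝ) ≠ 0 := by
    rintro hm
    simp [hm, hd] at h
  have hdR : (d : ℝ) ≠ 0 := by exact_mod_cast hd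
  refine ⟨k, ?_⟩
  field_simp at h
  exact_mod_cast h

theorem stmt14_general (n : ℕ) (g : Fin n → ℕ)
    (hg : ∀ i, 3 ≤ g i)
    (δ : Fin n → ℕ) (hδ : ∀ i, δ i = g i - 1)
    (gstar : ℕ) (hgstar : gstar = Finset.univ.lcm δ + 1)
    (h : ℕ) (hh : 2 ≤ h)
    (hmodal : ∀ i : Fin n, ∀ j : ℕ, j ≤ 2 * δ i →
      ∃ j' : ℕ, (j : ℝ) / (2 * (δ i : ℝ)) = (j' : ℝ) / (2 * ((h : ℝ) - 1))) :
    (∀ i, δ i ∣ (h - 1)) ∧ gstar ≤ h := by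
  have hdvd : ∀ i, δ i ∣ h - 1 := fun i ↦ by
    have hδi : δ i ≠ 0 := by have := hg i; have := hδ i; omega
    obtain ⟨j', hj'⟩ := hmodal i 1 (by omega)
    rw [← Nat.cast_pred (by omega), Nat.cast_one] at hj'
    exact Nat.dvd_of_one_div_two_mul_eq_div hδi hj'
  have hlcm : univ.lcm δ ≤ h - 1 := Nat.le_of_dvd (by omega) (Finset.lcm_dvd fun i _ ↦ hdvd i)
  exact ⟨hdvd, by omega⟩

/-- minimality of g* = lcm(δ₁,...,δₙ) + 1: if every former modal
point j/(2 δ_i) of every level i is a former modal point of granularity h ≥ 2,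
then each δ_i divides h - 1, hence g* ≤ h. -/
theorem stmt14 (n : ℕ) (g : Fin n → ℕ)
    (hodd : ∀ i, Odd (g i)) (hg : ∀ i, 3 ≤ g i)
    (δ : Fin n → ℕ) (hδ : ∀ i, δ i = g i - 1)
    (gstar : ℕ) (hgstar : gstar = Finset.univ.lcm δ + 1)
    (h : ℕ) (hh : 2 ≤ h)
    (hmodal : ∀ i : Fin n, ∀ j : ℕ, j ≤ 2 * δ i →
      ∃ j' : ℕ, (j : ℝ) / (2 * (δ i : ℝ)) = (j' : ℝ) / (2 * ((h : ℝ) - 1))) :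
    (∀ i, δ i ∣ (h - 1)) ∧ gstar ≤ h :=
  stmt14_general n g hg δ hδ gstar hgstar h hh hmodal
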